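/- arXiv:2605.19018 — 2 statements merged into one kernel-verified Lean document; each statement's English description precedes it below -/
import Mathlib

section
/- Let A, B be d_y×d_x real matrices with rank(A) ≤ r, and let Σ be a positive semidefinite d_x×d_x matrix with PSD square root Σ^{1/2}. Let B_r denote a best rank-r approximation of B. Then ‖(A−B)Σ^{1/2}‖_F² ≤ 8r(‖(A−B)Σ^{1/2}‖² + ‖(B−B_r)Σ^{1/2}‖²) + 2‖(B−B_r)Σ^{1/2}‖_F², where ‖·‖_F is the Frobenius norm and ‖·‖ the operator norm. -/
/-!
Put `E = (A - Bᵣ)S`, so that `(A - B)S = E - (B - Bᵣ)S`. The matrix `E` has rank at most `2r`,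
and for any matrix the squared Frobenius norm is the sum of the eigenvalues of `MᵀM`, at most
`rank M` of which are nonzero, each bounded by `‖MᵀM‖ = ‖M‖²`. Hence
`‖E‖_F² ≤ 2r‖E‖² ≤ 4r(‖(A - B)S‖² + ‖(B - Bᵣ)S‖²)`, and the triangle inequality for the Frobenius
norm together with `(a + b)² ≤ 2(a² + b²)` gives the claim.
-/

open Matrix

noncomputable def opNorm {m n : ℕ} (M : Matrix (Fin m) (Fin n) ℝ) : ℝ :=
  ‖LinearMap.toContinuousLinearMap (Matrix.toEuclideanLin M)‖

noncomputable def frobNorm {m n : ℕ} (M : Matrix (Fin m) (Fin n) ℝ) : ℝ :=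
  Real.sqrt (∑ i, ∑ j, (M i j) ^ 2)

theorem Matrix.rank_sub_le {m n K : Type*} [Fintype m] [Fintype n] [Field K]
    (A B : Matrix m n K) : (A - B).rank ≤ A.rank + B.rank := by
  have hrange : LinearMap.range (A - B).mulVecLin ≤
      LinearMap.range A.mulVecLin ⊔ LinearMap.range B.mulVecLin := by
    rintro _ ⟨v, rfl⟩
    simpa only [mulVecLin_apply, sub_mulVec] using
      Submodule.sub_mem_sup (LinearMap.mem_range_self A.mulVecLin v)
        (LinearMap.mem_range_self B.mulVecLin v)
  exact (Submodule.finrank_mono hrange).trans (Submodule.finrank_add_le_finrank_add_finrank _ _)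

theorem frobNorm_sq_eq_trace {m n : ℕ} (M : Matrix (Fin m) (Fin n) ℝ) :
    frobNorm M ^ 2 = (Mᵀ * M).trace := by
  rw [frobNorm, Real.sq_sqrt (by positivity), Finset.sum_comm]
  simp [Matrix.trace, Matrix.mul_apply, sq]

section Frobenius

attribute [local instance] Matrix.frobeniusNormedAddCommGroup

theorem frobNorm_eq_norm {m n : ℕ} (M : Matrix (Fin m) (Fin n) ℝ) : frobNorm M = ‖M‖ := by
  simp [frobNorm, Matrix.frobenius_norm_def, Real.sqrt_eq_rpow]

theorem frobNorm_sub_le {m n : ℕ} (X Y : Matrix (Fin m) (Fin n) ℝ) :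
    frobNorm (X - Y) ≤ frobNorm X + frobNorm Y := by
  simpa only [frobNorm_eq_norm] using norm_sub_le X Y

end Frobenius

section L2Operator

open scoped Matrix.Norms.L2Operator

theorem opNorm_eq_norm {m n : ℕ} (M : Matrix (Fin m) (Fin n) ℝ) : opNorm M = ‖M‖ := rfl

theorem opNorm_add_le {m n : ℕ} (X Y : Matrix (Fin m) (Fin n) ℝ) :
    opNorm (X + Y) ≤ opNorm X + opNorm Y :=
  norm_add_le X Y

variable {m n : Type*} [Fintype m] [Fintype n] [DecidableEq n]

/-- The eigenvalue lies in the spectrum of `MᴴM`, whose norm is `‖M‖²` by the C⋆-identity. -/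
theorem Matrix.eigenvalues_conjTranspose_mul_self_le_sq_norm (M : Matrix m n ℝ) (i : n) :
    (isHermitian_conjTranspose_mul_self M).eigenvalues i ≤ ‖M‖ ^ 2 := by
  have : Nonempty n := ⟨i⟩
  have h := spectrum.norm_le_norm_of_mem (A := Matrix n n ℝ)
    ((isHermitian_conjTranspose_mul_self M).eigenvalues_mem_spectrum_real i)
  rw [l2_opNorm_conjTranspose_mul_self, Real.norm_eq_abs] at h
  nlinarith [le_abs_self ((isHermitian_conjTranspose_mul_self M).eigenvalues i)]

theorem Matrix.trace_transpose_mul_self_le_rank_mul_sq_norm (M : Matrix m n ℝ) :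
    (Mᵀ * M).trace ≤ M.rank * ‖M‖ ^ 2 := by
  have hM := isHermitian_conjTranspose_mul_self M
  have hrank : M.rank = (Finset.univ.filter fun i ↦ hM.eigenvalues i ≠ 0).card := by
    rw [← rank_conjTranspose_mul_self, hM.rank_eq_card_non_zero_eigs, Fintype.card_subtype]
  calc (Mᵀ * M).trace = ∑ i, hM.eigenvalues i := by
        simpa using hM.trace_eq_sum_eigenvalues
    _ = ∑ i ∈ Finset.univ.filter fun i ↦ hM.eigenvalues i ≠ 0, hM.eigenvalues i :=
        (Finset.sum_filter_ne_zero _).symm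
    _ ≤ M.rank * ‖M‖ ^ 2 := by
        rw [hrank, ← nsmul_eq_mul]
        exact Finset.sum_le_card_nsmul _ _ _ fun i _ ↦
          M.eigenvalues_conjTranspose_mul_self_le_sq_norm i

theorem frobNorm_sq_le_rank_mul_opNorm_sq {m n : ℕ} (M : Matrix (Fin m) (Fin n) ℝ) :
    frobNorm M ^ 2 ≤ M.rank * opNorm M ^ 2 := by
  rw [frobNorm_sq_eq_trace, opNorm_eq_norm]
  exact M.trace_transpose_mul_self_le_rank_mul_sq_norm

end L2Operator

theorem lowrank_decomposition_general {dy dx : ℕ} (r : ℕ)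
    (A B Br : Matrix (Fin dy) (Fin dx) ℝ) (S : Matrix (Fin dx) (Fin dx) ℝ)
    (hA : A.rank ≤ r)
    (hBr_rank : Br.rank ≤ r) :
    frobNorm ((A - B) * S) ^ 2 ≤
      8 * r * (opNorm ((A - B) * S) ^ 2 + opNorm ((B - Br) * S) ^ 2) +
        2 * frobNorm ((B - Br) * S) ^ 2 := by
  set X := (A - B) * S
  set D := (B - Br) * S
  set E := (A - Br) * S
  have hX : X = E - D := by simp only [X, D, E, ← Matrix.sub_mul, sub_sub_sub_cancel_right]
  have hE : E = X + D := by rw [hX, sub_add_cancel]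
  have hrank : (E.rank : ℝ) ≤ 2 * r := by
    have : E.rank ≤ A.rank + Br.rank := (rank_mul_le_left _ S).trans (rank_sub_le A Br)
    exact_mod_cast by omega
  calc frobNorm X ^ 2 ≤ (frobNorm E + frobNorm D) ^ 2 := by
        gcongr
        · exact Real.sqrt_nonneg _
        · exact hX ▸ frobNorm_sub_le E D
    _ ≤ 2 * (frobNorm E ^ 2 + frobNorm D ^ 2) := add_sq_le
    _ ≤ 2 * (2 * r * opNorm E ^ 2 + frobNorm D ^ 2) := by
        grw [frobNorm_sq_le_rank_mul_opNorm_sq E, hrank]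
    _ ≤ 2 * (2 * r * (2 * (opNorm X ^ 2 + opNorm D ^ 2)) + frobNorm D ^ 2) := by
        have hEop : opNorm E ^ 2 ≤ (opNorm X + opNorm D) ^ 2 := by
          gcongr
          · exact norm_nonneg _
          · exact hE ▸ opNorm_add_le X D
        grw [hEop, add_sq_le]
    _ = 8 * r * (opNorm X ^ 2 + opNorm D ^ 2) + 2 * frobNorm D ^ 2 := by ring

/-- Decomposition bound for low-rank matrices: if `rank A ≤ r` and `Br` is a best
rank-`r` approximation of `B` (in Frobenius norm, i.e. an SVD truncation), then for any
PSD square root `S` of a PSD matrix `Σ`,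
`‖(A−B)S‖_F² ≤ 8r(‖(A−B)S‖² + ‖(B−Br)S‖²) + 2‖(B−Br)S‖_F²`. -/
theorem lowrank_decomposition {dy dx : ℕ} (r : ℕ)
    (A B Br : Matrix (Fin dy) (Fin dx) ℝ) (Sig S : Matrix (Fin dx) (Fin dx) ℝ)
    (hSig : Sig.PosSemidef) (hS : S.PosSemidef) (hSS : S * S = Sig)
    (hA : A.rank ≤ r)
    (hBr_rank : Br.rank ≤ r)
    (hBr_best : ∀ C : Matrix (Fin dy) (Fin dx) ℝ, C.rank ≤ r →
      frobNorm (B - Br) ≤ frobNorm (B - C)) :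
    frobNorm ((A - B) * S) ^ 2 ≤
      8 * r * (opNorm ((A - B) * S) ^ 2 + opNorm ((B - Br) * S) ^ 2) +
        2 * frobNorm ((B - Br) * S) ^ 2 :=
  lowrank_decomposition_general r A B Br S hA hBr_rank
end

section
/- Let X ∈ ℝ^{d_x×n} with rank(X) = min{n, d_x}, let Σ̂ = (1/n)XXᵀ, and let Δ̂_FFT ∈ ℝ^{d_y×d_x}. Suppose r ≤ rank(Δ̂_FFT Σ̂^{1/2}) and σ_r(Δ̂_FFT Σ̂^{1/2}) > σ_{r+1}(Δ̂_FFT Σ̂^{1/2}). Then Δ̂_LoRA := [Δ̂_FFT Σ̂^{1/2}]_r (Σ̂^{1/2})⁺ is a minimizer of ‖ΔX − Δ̂_FFT X‖_F² over all matrices Δ of rank at most r, and among all such minimizers it has minimal Frobenius norm. -/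
/-!
Since `X Xᵀ = n S²`, we have `‖ΔX − WX‖² = n ‖ΔS − WS‖²`, so the problem is rank-`r`
approximation of `WS` by matrices `ΔS`. The Penrose equations make `PS` and `SP` orthogonal
projections, and `TPS − WS = (T − WS) PS` is no larger than `T − WS`; hence `TP` is optimal.
For another minimiser `Δ`, `ΔS` is then also a best rank-`r` approximation of `WS`, and the gap
makes this approximation unique (Eckart–Young). Write `(WS)ᵀ WS = U diag(μ) Uᵀ` with `μ`
decreasing, so that `sval (WS) (k + 1) = √μ_k` and the gap reads `μ_r < μ_{r-1}`. A best
approximation `B` equals `WS Q` for the projection `Q` onto its row space, and optimality forces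
`∑ μ_k (UᵀQU)_kk = ∑_{k<r} μ_k`; since `0 ≤ (UᵀQU)_kk ≤ 1` and `tr Q ≤ r`, Ky Fan's argument
then identifies `Q` with the projection onto the first `r` columns of `U`. So `ΔS = T`, and
`‖TP‖ = ‖Δ (SP)‖ ≤ ‖Δ‖`.
-/

open Matrix

/-- `sval M k` is the `k`-th largest singular value of `M` (1-indexed), via the
approximation-number characterization `σ_k(M) = inf {‖M - B‖ : rank B < k}`. -/
noncomputable def sval {m n : ℕ} (M : Matrix (Fin m) (Fin n) ℝ) (k : ℕ) : ℝ :=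
  sInf ((fun B => opNorm (M - B)) '' {B | B.rank < k})

theorem frobNorm_nonneg {m n : ℕ} (M : Matrix (Fin m) (Fin n) ℝ) : 0 ≤ frobNorm M :=
  Real.sqrt_nonneg _

theorem frobNorm_sq {m n : ℕ} (M : Matrix (Fin m) (Fin n) ℝ) :
    frobNorm M ^ 2 = trace (M * Mᵀ) := by
  rw [frobNorm, Real.sq_sqrt (by positivity)]
  simp [trace, mul_apply, sq]

theorem frobNorm_eq_zero {m n : ℕ} {M : Matrix (Fin m) (Fin n) ℝ} : frobNorm M = 0 ↔ M = 0 := by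
  rw [← sq_eq_zero_iff, frobNorm_sq, ← conjTranspose_eq_transpose_of_trivial,
    trace_mul_conjTranspose_self_eq_zero_iff]

theorem frobNorm_le_frobNorm_iff {m n p q : ℕ} {M : Matrix (Fin m) (Fin n) ℝ}
    {N : Matrix (Fin p) (Fin q) ℝ} : frobNorm M ≤ frobNorm N ↔ frobNorm M ^ 2 ≤ frobNorm N ^ 2 :=
  (sq_le_sq₀ (frobNorm_nonneg M) (frobNorm_nonneg N)).symm

theorem frobNorm_sub_comm {m n : ℕ} (M N : Matrix (Fin m) (Fin n) ℝ) :
    frobNorm (M - N) = frobNorm (N - M) := by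
  rw [← neg_sub]
  simp only [frobNorm, Matrix.neg_apply, neg_sq]

theorem frobNorm_sq_mul_of_mul_transpose_eq {m n p q : ℕ} (M : Matrix (Fin m) (Fin n) ℝ)
    {X : Matrix (Fin n) (Fin p) ℝ} {S : Matrix (Fin n) (Fin q) ℝ} {c : ℝ}
    (h : X * Xᵀ = c • (S * Sᵀ)) : frobNorm (M * X) ^ 2 = c * frobNorm (M * S) ^ 2 := by
  rw [frobNorm_sq, frobNorm_sq, transpose_mul, transpose_mul, Matrix.mul_assoc,
    ← Matrix.mul_assoc X, h, Matrix.mul_assoc, ← Matrix.mul_assoc S, Matrix.smul_mul,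
    Matrix.mul_smul, trace_smul, smul_eq_mul]

theorem frobNorm_mul_le_frobNorm_mul_iff {m n p q : ℕ} {X : Matrix (Fin n) (Fin p) ℝ}
    {S : Matrix (Fin n) (Fin q) ℝ} {c : ℝ} (h : X * Xᵀ = c • (S * Sᵀ)) (hc : 0 < c)
    (M N : Matrix (Fin m) (Fin n) ℝ) :
    frobNorm (M * X) ≤ frobNorm (N * X) ↔ frobNorm (M * S) ≤ frobNorm (N * S) := by
  rw [frobNorm_le_frobNorm_iff, frobNorm_le_frobNorm_iff, frobNorm_sq_mul_of_mul_transpose_eq _ h,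
    frobNorm_sq_mul_of_mul_transpose_eq _ h]
  exact mul_le_mul_iff_of_pos_left hc

namespace Matrix

theorem mulVec_dotProduct_mulVec {m n p : Type*} [Fintype m] [Fintype n] [Fintype p]
    (M : Matrix m n ℝ) (N : Matrix m p ℝ) (v : n → ℝ) (w : p → ℝ) :
    (M *ᵥ v) ⬝ᵥ (N *ᵥ w) = v ⬝ᵥ ((Mᵀ * N) *ᵥ w) := by
  rw [← mulVec_mulVec, dotProduct_mulVec v, vecMul_transpose]

theorem dotProduct_diagonal_mulVec {n : Type*} [Fintype n] [DecidableEq n] (μ v : n → ℝ) :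
    v ⬝ᵥ (diagonal μ *ᵥ v) = ∑ k, μ k * v k ^ 2 := by
  simp only [dotProduct, mulVec_diagonal]
  exact Finset.sum_congr rfl fun k _ => by ring

theorem diagonal_one_sub {n : Type*} [DecidableEq n] (t : n → ℝ) :
    diagonal (1 - t) = 1 - diagonal t := by
  ext i j
  by_cases h : i = j <;> simp [h]

theorem transpose_mul_conj_mul {n : Type*} [Fintype n] [DecidableEq n] {U : Matrix n n ℝ}
    (hU : Uᵀ * U = 1) (D : Matrix n n ℝ) : Uᵀ * (U * D * Uᵀ) * U = D := by
  simp only [Matrix.mul_assoc]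
  rw [hU, Matrix.mul_one, ← Matrix.mul_assoc, hU, Matrix.one_mul]

theorem trace_mul_conj_diagonal {n : Type*} [Fintype n] [DecidableEq n] (Q U : Matrix n n ℝ)
    (f : n → ℝ) : trace (Q * (U * diagonal f * Uᵀ)) = ∑ k, f k * (Uᵀ * Q * U) k k := by
  rw [show Q * (U * diagonal f * Uᵀ) = Q * U * diagonal f * Uᵀ by simp only [Matrix.mul_assoc],
    trace_mul_comm, ← Matrix.mul_assoc, ← Matrix.mul_assoc]
  simp [trace, mul_diagonal, mul_comm]

theorem transpose_mul_diagonal_mul_submatrix_one {d p : ℕ} {c : Fin p → Fin d}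
    (hc : Function.Injective c) (f : Fin d → ℝ) :
    ((1 : Matrix (Fin d) (Fin d) ℝ).submatrix id c)ᵀ * diagonal f *
      (1 : Matrix (Fin d) (Fin d) ℝ).submatrix id c = diagonal (f ∘ c) := by
  ext a b
  by_cases h : a = b <;> simp [mul_apply, one_apply, diagonal_apply, hc.eq_iff, h]

theorem exists_mulVec_eq_zero_of_rank_lt {m p : Type*} [Fintype m] [Fintype p]
    (C : Matrix m p ℝ) (h : C.rank < Fintype.card p) : ∃ w ≠ 0, C *ᵥ w = 0 := by
  have hker := C.mulVecLin.finrank_range_add_finrank_ker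
  rw [Module.finrank_fintype_fun_eq_card] at hker
  have hne : LinearMap.ker C.mulVecLin ≠ ⊥ :=
    Submodule.one_le_finrank_iff.mp (by unfold rank at h; omega)
  obtain ⟨w, hw, hw0⟩ := Submodule.exists_mem_ne_zero_of_ne_bot hne
  exact ⟨w, hw0, hw⟩

namespace IsHermitian

variable {n : Type*} [Fintype n] [DecidableEq n] {G : Matrix n n ℝ} (hG : G.IsHermitian)

theorem transpose_eigenvectorUnitary_mul_self :
    (hG.eigenvectorUnitary : Matrix n n ℝ)ᵀ * hG.eigenvectorUnitary = 1 := by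
  simpa [star_eq_conjTranspose] using (mem_unitaryGroup_iff').mp hG.eigenvectorUnitary.2

theorem eq_eigenvectorUnitary_conj :
    G = (hG.eigenvectorUnitary : Matrix n n ℝ) * diagonal hG.eigenvalues *
      (hG.eigenvectorUnitary : Matrix n n ℝ)ᵀ := by
  conv_lhs => rw [hG.spectral_theorem]
  rfl

theorem transpose_eigenvectorUnitary_mul_mul_self :
    (hG.eigenvectorUnitary : Matrix n n ℝ)ᵀ * G * hG.eigenvectorUnitary =
      diagonal hG.eigenvalues := by
  have h := hG.eq_eigenvectorUnitary_conj
  have hU := hG.transpose_eigenvectorUnitary_mul_self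
  generalize (hG.eigenvectorUnitary : Matrix n n ℝ) = U at h hU ⊢
  generalize hG.eigenvalues = μ at h ⊢
  rw [h, transpose_mul_conj_mul hU]

end IsHermitian

end Matrix

section IsStarProjection

variable {n : Type*} [Fintype n] {Q : Matrix n n ℝ}

theorem IsStarProjection.transpose_eq (hQ : IsStarProjection Q) : Qᵀ = Q := by
  simpa [star_eq_conjTranspose] using hQ.isSelfAdjoint.star_eq

theorem isStarProjection_of_transpose_eq (hidem : Q * Q = Q) (hsymm : Qᵀ = Q) :
    IsStarProjection Q :=
  ⟨hidem, by simpa [IsSelfAdjoint, star_eq_conjTranspose] using hsymm⟩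

theorem isStarProjection_mul_of_mul_mul_eq_left {S P : Matrix n n ℝ} (h : S * P * S = S)
    (hsymm : (S * P)ᵀ = S * P) : IsStarProjection (S * P) :=
  isStarProjection_of_transpose_eq (by rw [← Matrix.mul_assoc, h]) hsymm

theorem isStarProjection_mul_of_mul_mul_eq_right {S P : Matrix n n ℝ} (h : S * P * S = S)
    (hsymm : (P * S)ᵀ = P * S) : IsStarProjection (P * S) :=
  isStarProjection_of_transpose_eq (by rw [Matrix.mul_assoc, ← Matrix.mul_assoc S, h]) hsymm

theorem isStarProjection_diagonal [DecidableEq n] {t : n → ℝ} (ht : ∀ k, t k = 0 ∨ t k = 1) :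
    IsStarProjection (diagonal t) := by
  refine isStarProjection_of_transpose_eq ?_ (diagonal_transpose t)
  rw [diagonal_mul_diagonal]
  congr 1
  ext k
  rcases ht k with h | h <;> simp [h]

theorem IsStarProjection.transpose_mul_mul [DecidableEq n] (hQ : IsStarProjection Q)
    {U : Matrix n n ℝ} (hU : U * Uᵀ = 1) : IsStarProjection (Uᵀ * Q * U) := by
  refine isStarProjection_of_transpose_eq ?_ ?_
  · rw [show Uᵀ * Q * U * (Uᵀ * Q * U) = Uᵀ * Q * (U * Uᵀ) * Q * U by
      simp only [Matrix.mul_assoc], hU, Matrix.mul_one, Matrix.mul_assoc Uᵀ Q Q,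
      hQ.isIdempotentElem.eq]
  · rw [transpose_mul, transpose_mul, transpose_transpose, hQ.transpose_eq, Matrix.mul_assoc]

theorem IsStarProjection.diag_nonneg (hQ : IsStarProjection Q) (k : n) : 0 ≤ Q k k := by
  rw [← hQ.isIdempotentElem.eq]
  nth_rw 2 [← hQ.transpose_eq]
  simp only [mul_apply, transpose_apply]
  exact Finset.sum_nonneg fun j _ => mul_self_nonneg _

theorem IsStarProjection.diag_le_one [DecidableEq n] (hQ : IsStarProjection Q) (k : n) :
    Q k k ≤ 1 := by
  have := hQ.one_sub.diag_nonneg k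
  rw [Matrix.sub_apply, one_apply_eq] at this
  linarith

end IsStarProjection

theorem frobNorm_sq_mul_isStarProjection {m n : ℕ} (M : Matrix (Fin m) (Fin n) ℝ)
    {Q : Matrix (Fin n) (Fin n) ℝ} (hQ : IsStarProjection Q) :
    frobNorm (M * Q) ^ 2 = trace (M * Q * Mᵀ) := by
  rw [frobNorm_sq, transpose_mul, hQ.transpose_eq, Matrix.mul_assoc, ← Matrix.mul_assoc Q Q,
    hQ.isIdempotentElem.eq, ← Matrix.mul_assoc]

theorem frobNorm_sq_sub_of_mul_isStarProjection {m n : ℕ} (M N : Matrix (Fin m) (Fin n) ℝ)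
    {Q : Matrix (Fin n) (Fin n) ℝ} (hQ : IsStarProjection Q) (hN : N * Q = N) :
    frobNorm (M - N) ^ 2 = frobNorm (M - M * Q) ^ 2 + frobNorm (M * Q - N) ^ 2 := by
  have hcross : (M - M * Q) * (M * Q - N)ᵀ = 0 := by
    rw [← hN, ← Matrix.sub_mul, transpose_mul, hQ.transpose_eq, ← Matrix.mul_assoc,
      Matrix.sub_mul, Matrix.mul_assoc M Q Q, hQ.isIdempotentElem.eq, sub_self, Matrix.zero_mul]
  have hcross' : (M * Q - N) * (M - M * Q)ᵀ = 0 := by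
    rw [← transpose_transpose (M * Q - N), ← transpose_mul, hcross, transpose_zero]
  rw [frobNorm_sq, frobNorm_sq, frobNorm_sq, show M - N = (M - M * Q) + (M * Q - N) by abel,
    transpose_add, Matrix.add_mul, Matrix.mul_add, Matrix.mul_add, hcross, hcross']
  simp

theorem frobNorm_mul_isStarProjection_le {m n : ℕ} (M : Matrix (Fin m) (Fin n) ℝ)
    {Q : Matrix (Fin n) (Fin n) ℝ} (hQ : IsStarProjection Q) : frobNorm (M * Q) ≤ frobNorm M := by
  have h := frobNorm_sq_sub_of_mul_isStarProjection M 0 hQ (Matrix.zero_mul Q)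
  rw [sub_zero, sub_zero] at h
  rw [frobNorm_le_frobNorm_iff, h]
  nlinarith [sq_nonneg (frobNorm (M - M * Q))]

theorem IsStarProjection.eq_of_trace_mul_eq {n : ℕ} {Q R : Matrix (Fin n) (Fin n) ℝ}
    (hQ : IsStarProjection Q) (hR : IsStarProjection R) (hQR : trace (Q * R) = trace R)
    (htr : trace Q ≤ trace R) : Q = R := by
  have hsq : frobNorm (Q - R) ^ 2 = trace Q - trace R := by
    rw [frobNorm_sq, transpose_sub, hQ.transpose_eq, hR.transpose_eq, Matrix.sub_mul,
      Matrix.mul_sub, Matrix.mul_sub, hQ.isIdempotentElem.eq, hR.isIdempotentElem.eq,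
      trace_sub, trace_sub, trace_sub, trace_mul_comm R Q, hQR]
    ring
  have h0 : frobNorm (Q - R) = 0 := by nlinarith [frobNorm_nonneg (Q - R)]
  exact sub_eq_zero.mp (frobNorm_eq_zero.mp h0)

theorem Matrix.exists_isStarProjection_mul_eq_self_trace_eq_rank {m n : Type*} [Fintype m]
    [Fintype n] [DecidableEq n] (B : Matrix m n ℝ) :
    ∃ Q : Matrix n n ℝ, IsStarProjection Q ∧ B * Q = B ∧ trace Q = B.rank := by
  have hH : (Bᵀ * B).IsHermitian := by simpa using isHermitian_conjTranspose_mul_self B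
  set V : Matrix n n ℝ := ↑hH.eigenvectorUnitary
  have hVV : Vᵀ * V = 1 := hH.transpose_eigenvectorUnitary_mul_self
  set e : n → ℝ := fun k => if hH.eigenvalues k = 0 then 0 else 1
  have he : ∀ k, hH.eigenvalues k * (1 - e k) = 0 := fun k => by
    by_cases h : hH.eigenvalues k = 0 <;> simp [e, h]
  have hD : IsStarProjection (diagonal e) := isStarProjection_diagonal fun k => by
    by_cases h : hH.eigenvalues k = 0 <;> simp [e, h]
  refine ⟨V * diagonal e * Vᵀ, by simpa using hD.transpose_mul_mul (U := Vᵀ) (by simpa using hVV),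
    ?_, ?_⟩
  · -- the columns of `B V` belonging to the zero eigenvalues of `Bᵀ B` vanish
    have hker : B * V * diagonal (1 - e) = 0 := by
      rw [← trace_conjTranspose_mul_self_eq_zero_iff, conjTranspose_eq_transpose_of_trivial,
        transpose_mul, diagonal_transpose,
        show diagonal (1 - e) * (B * V)ᵀ * (B * V * diagonal (1 - e)) =
          diagonal (1 - e) * (Vᵀ * (Bᵀ * B) * V) * diagonal (1 - e) by
            simp only [transpose_mul, Matrix.mul_assoc],
        hH.transpose_eigenvectorUnitary_mul_mul_self, diagonal_mul_diagonal,
        diagonal_mul_diagonal, trace_diagonal]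
      exact Finset.sum_eq_zero fun k _ => by
        rw [Pi.sub_apply, Pi.one_apply, mul_comm (1 - e k), he k, zero_mul]
    rw [diagonal_one_sub, Matrix.mul_sub, Matrix.mul_one, sub_eq_zero] at hker
    rw [← Matrix.mul_assoc, ← Matrix.mul_assoc, ← hker, Matrix.mul_assoc,
      mul_eq_one_comm.mp hVV, Matrix.mul_one]
  · rw [trace_mul_comm, ← Matrix.mul_assoc, hVV, Matrix.one_mul, trace_diagonal,
      ← rank_transpose_mul_self, hH.rank_eq_card_non_zero_eigs, Fintype.card_subtype,
      Finset.card_filter]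
    push_cast
    exact Finset.sum_congr rfl fun k _ => by by_cases h : hH.eigenvalues k = 0 <;> simp [e, h]

theorem EuclideanSpace.sq_norm_eq_dotProduct {n : ℕ} (x : EuclideanSpace ℝ (Fin n)) :
    ‖x‖ ^ 2 = x.ofLp ⬝ᵥ x.ofLp := by
  rw [EuclideanSpace.norm_sq_eq]
  simp [dotProduct, sq]

theorem dotProduct_mulVec_le_opNorm_sq {m n : ℕ} (M : Matrix (Fin m) (Fin n) ℝ)
    (v : Fin n → ℝ) : (M *ᵥ v) ⬝ᵥ (M *ᵥ v) ≤ opNorm M ^ 2 * (v ⬝ᵥ v) := by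
  have h := pow_le_pow_left₀ (norm_nonneg _)
    ((toEuclideanLin M).toContinuousLinearMap.le_opNorm (WithLp.toLp 2 v)) 2
  rwa [mul_pow, EuclideanSpace.sq_norm_eq_dotProduct, EuclideanSpace.sq_norm_eq_dotProduct] at h

theorem opNorm_le_of_dotProduct_mulVec_le {m n : ℕ} {M : Matrix (Fin m) (Fin n) ℝ} {c : ℝ}
    (hc : 0 ≤ c) (h : ∀ v, (M *ᵥ v) ⬝ᵥ (M *ᵥ v) ≤ c ^ 2 * (v ⬝ᵥ v)) : opNorm M ≤ c :=
  ContinuousLinearMap.opNorm_le_bound _ hc fun x => by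
    rw [← sq_le_sq₀ (norm_nonneg _) (by positivity), mul_pow,
      EuclideanSpace.sq_norm_eq_dotProduct, EuclideanSpace.sq_norm_eq_dotProduct]
    simpa using h x.ofLp

def topInd (d r : ℕ) : Fin d → ℝ := fun k => if (k : ℕ) < r then 1 else 0

theorem sum_topInd (d r : ℕ) : ∑ k, topInd d r k = min d r := by
  simp [topInd, Fin.card_filter_val_lt]

section KyFan

variable {d r : ℕ}

/-- For `c = μ r`, `μ` decreasing and `0 ≤ t ≤ 1`, every summand on the right is nonnegative. -/
theorem sum_mul_topInd_sub_sum_mul (hr : r ≤ d) (μ t : Fin d → ℝ) (c : ℝ) :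
    ∑ k, μ k * topInd d r k - ∑ k, μ k * t k =
      ∑ k, (μ k - c) * (topInd d r k - t k) + c * (r - ∑ k, t k) := by
  have he : ∑ k, topInd d r k = r := by rw [sum_topInd, min_eq_right hr]
  rw [← he, mul_sub, Finset.mul_sum, Finset.mul_sum, ← Finset.sum_sub_distrib,
    ← Finset.sum_sub_distrib, ← Finset.sum_add_distrib]
  exact Finset.sum_congr rfl fun k _ => by ring

theorem sub_mul_topInd_sub_nonneg {μ t : Fin d → ℝ} (hr : r < d) (hμ : Antitone μ)
    (ht0 : ∀ k, 0 ≤ t k) (ht1 : ∀ k, t k ≤ 1) (k : Fin d) :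
    0 ≤ (μ k - μ ⟨r, hr⟩) * (topInd d r k - t k) := by
  by_cases hk : (k : ℕ) < r
  · have : μ ⟨r, hr⟩ ≤ μ k := hμ (Fin.le_def.mpr hk.le)
    simp only [topInd, hk, if_true]
    nlinarith [ht1 k]
  · have : μ k ≤ μ ⟨r, hr⟩ := hμ (Fin.le_def.mpr (Nat.le_of_not_lt hk))
    simp only [topInd, hk, if_false]
    nlinarith [ht0 k]

theorem sum_mul_le_sum_mul_topInd {μ t : Fin d → ℝ} (hr : r < d) (hμ : Antitone μ)
    (hμ0 : ∀ k, 0 ≤ μ k) (ht0 : ∀ k, 0 ≤ t k) (ht1 : ∀ k, t k ≤ 1) (hsum : ∑ k, t k ≤ r) :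
    ∑ k, μ k * t k ≤ ∑ k, μ k * topInd d r k := by
  have h := sum_mul_topInd_sub_sum_mul hr.le μ t (μ ⟨r, hr⟩)
  have hterms := Finset.sum_nonneg fun k (_ : k ∈ Finset.univ) =>
    sub_mul_topInd_sub_nonneg hr hμ ht0 ht1 k
  nlinarith [hμ0 ⟨r, hr⟩]

theorem eq_one_of_sum_mul_eq_sum_mul_topInd {μ t : Fin d → ℝ} (hr : r < d) (hμ : Antitone μ)
    (hgap : ∀ k : Fin d, (k : ℕ) < r → μ ⟨r, hr⟩ < μ k) (hμ0 : ∀ k, 0 ≤ μ k)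
    (ht0 : ∀ k, 0 ≤ t k) (ht1 : ∀ k, t k ≤ 1) (hsum : ∑ k, t k ≤ r)
    (heq : ∑ k, μ k * t k = ∑ k, μ k * topInd d r k) {k : Fin d} (hk : (k : ℕ) < r) :
    t k = 1 := by
  have h := sum_mul_topInd_sub_sum_mul hr.le μ t (μ ⟨r, hr⟩)
  have hterms := Finset.sum_nonneg fun k (_ : k ∈ Finset.univ) =>
    sub_mul_topInd_sub_nonneg hr hμ ht0 ht1 k
  have hslack := mul_nonneg (hμ0 ⟨r, hr⟩) (sub_nonneg.mpr hsum)
  have hzero : ∑ k, (μ k - μ ⟨r, hr⟩) * (topInd d r k - t k) = 0 := by linarith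
  have hk0 := (Finset.sum_eq_zero_iff_of_nonneg fun k _ =>
    sub_mul_topInd_sub_nonneg hr hμ ht0 ht1 k).mp hzero k (Finset.mem_univ k)
  simp only [topInd, hk, if_true] at hk0
  rcases mul_eq_zero.mp hk0 with h | h
  · linarith [hgap k hk]
  · linarith

end KyFan

def IsBestRankApprox {m n : ℕ} (r : ℕ) (A B : Matrix (Fin m) (Fin n) ℝ) : Prop :=
  B.rank ≤ r ∧ ∀ C : Matrix (Fin m) (Fin n) ℝ, C.rank ≤ r → frobNorm (A - B) ≤ frobNorm (A - C)

namespace IsBestRankApprox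

variable {m n r : ℕ} {A B : Matrix (Fin m) (Fin n) ℝ}

theorem eq_mul_of_mul_eq (hB : IsBestRankApprox r A B) {Q R : Matrix (Fin n) (Fin n) ℝ}
    (hQ : IsStarProjection Q) (hBQ : B * Q = B) (hR : IsStarProjection R)
    (hAR : (A * R).rank ≤ r) (hle : frobNorm (A * Q) ≤ frobNorm (A * R)) :
    B = A * Q ∧ frobNorm (A * Q) = frobNorm (A * R) := by
  have hB_sq := frobNorm_sq_sub_of_mul_isStarProjection A B hQ hBQ
  have hQ_sq := frobNorm_sq_sub_of_mul_isStarProjection A 0 hQ (Matrix.zero_mul Q)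
  have hR_sq := frobNorm_sq_sub_of_mul_isStarProjection A 0 hR (Matrix.zero_mul R)
  rw [sub_zero, sub_zero] at hQ_sq hR_sq
  have hopt := frobNorm_le_frobNorm_iff.mp (hB.2 (A * R) hAR)
  have hle_sq := frobNorm_le_frobNorm_iff.mp hle
  have h0 : frobNorm (A * Q - B) = 0 := by
    nlinarith [sq_nonneg (frobNorm (A * Q - B)), frobNorm_nonneg (A * Q - B)]
  refine ⟨(sub_eq_zero.mp (frobNorm_eq_zero.mp h0)).symm, ?_⟩
  rw [h0] at hB_sq
  nlinarith [frobNorm_nonneg (A * Q), frobNorm_nonneg (A * R)]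

theorem eq_self_of_width_le (hB : IsBestRankApprox r A B) (hn : n ≤ r) : B = A := by
  have h := hB.2 A ((rank_le_width A).trans hn)
  rw [sub_self, frobNorm_eq_zero.mpr rfl] at h
  exact (sub_eq_zero.mp (frobNorm_eq_zero.mp (le_antisymm h (frobNorm_nonneg _)))).symm

end IsBestRankApprox

/-- A spectral decomposition of `Aᵀ A` with decreasing eigenvalues: the columns of `U` are right
singular vectors of `A` and `μ k` is the square of its `(k + 1)`-st singular value. -/
structure SortedGramEigen {m d : ℕ} (A : Matrix (Fin m) (Fin d) ℝ) where
  U : Matrix (Fin d) (Fin d) ℝ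
  μ : Fin d → ℝ
  transpose_mul_self : Uᵀ * U = 1
  gram_eq : Aᵀ * A = U * diagonal μ * Uᵀ
  antitone : Antitone μ
  nonneg : ∀ k, 0 ≤ μ k

theorem SortedGramEigen.nonempty {m d : ℕ} (A : Matrix (Fin m) (Fin d) ℝ) :
    Nonempty (SortedGramEigen A) := by
  have hG : (Aᵀ * A).PosSemidef := by simpa using posSemidef_conjTranspose_mul_self A
  set U₀ : Matrix (Fin d) (Fin d) ℝ := ↑hG.1.eigenvectorUnitary
  set π := Tuple.sort (OrderDual.toDual ∘ hG.1.eigenvalues)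
  refine ⟨⟨U₀.submatrix id π, hG.1.eigenvalues ∘ π, ?_, ?_,
    monotone_toDual_comp_iff.mp (Tuple.monotone_sort (OrderDual.toDual ∘ hG.1.eigenvalues)),
    fun k => hG.eigenvalues_nonneg _⟩⟩
  · rw [transpose_submatrix, ← submatrix_mul U₀ᵀ U₀ π id π Function.bijective_id,
      hG.1.transpose_eigenvectorUnitary_mul_self, submatrix_one_equiv]
  · rw [← submatrix_diagonal_equiv, transpose_submatrix, submatrix_mul_equiv,
      submatrix_mul_equiv, submatrix_id_id]
    exact hG.1.eq_eigenvectorUnitary_conj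

namespace SortedGramEigen

variable {m d : ℕ} {A : Matrix (Fin m) (Fin d) ℝ} (E : SortedGramEigen A)

theorem mul_transpose_self : E.U * E.Uᵀ = 1 := mul_eq_one_comm.mp E.transpose_mul_self

theorem dotProduct_self_U_mulVec (z : Fin d → ℝ) : (E.U *ᵥ z) ⬝ᵥ (E.U *ᵥ z) = z ⬝ᵥ z := by
  rw [mulVec_dotProduct_mulVec, E.transpose_mul_self, one_mulVec]

theorem dotProduct_self_mulVec_U_mulVec (z : Fin d → ℝ) :
    (A *ᵥ (E.U *ᵥ z)) ⬝ᵥ (A *ᵥ (E.U *ᵥ z)) = ∑ k, E.μ k * z k ^ 2 := by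
  rw [mulVec_mulVec, mulVec_dotProduct_mulVec, transpose_mul,
    show E.Uᵀ * Aᵀ * (A * E.U) = E.Uᵀ * (Aᵀ * A) * E.U by simp only [Matrix.mul_assoc],
    E.gram_eq, transpose_mul_conj_mul E.transpose_mul_self, dotProduct_diagonal_mulVec]

theorem frobNorm_sq_mul_isStarProjection_eq_sum {Q : Matrix (Fin d) (Fin d) ℝ}
    (hQ : IsStarProjection Q) : frobNorm (A * Q) ^ 2 = ∑ k, E.μ k * (E.Uᵀ * Q * E.U) k k := by
  rw [frobNorm_sq_mul_isStarProjection A hQ, trace_mul_comm, ← Matrix.mul_assoc, trace_mul_comm,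
    E.gram_eq, trace_mul_conj_diagonal]

def topProj (r : ℕ) : Matrix (Fin d) (Fin d) ℝ := E.U * diagonal (topInd d r) * E.Uᵀ

theorem transpose_mul_topProj_mul (r : ℕ) : E.Uᵀ * E.topProj r * E.U = diagonal (topInd d r) :=
  transpose_mul_conj_mul E.transpose_mul_self _

theorem isStarProjection_topProj (r : ℕ) : IsStarProjection (E.topProj r) := by
  have hD : IsStarProjection (diagonal (topInd d r)) := isStarProjection_diagonal fun k => by
    by_cases h : (k : ℕ) < r <;> simp [topInd, h]
  simpa [topProj] using hD.transpose_mul_mul (U := E.Uᵀ) (by simpa using E.transpose_mul_self)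

theorem trace_topProj (r : ℕ) : trace (E.topProj r) = min d r := by
  rw [topProj, trace_mul_comm, ← Matrix.mul_assoc, E.transpose_mul_self, Matrix.one_mul,
    trace_diagonal, sum_topInd]

theorem rank_topProj_le (r : ℕ) : (E.topProj r).rank ≤ r := by
  calc (E.topProj r).rank ≤ (diagonal (topInd d r)).rank :=
        (rank_mul_le_left _ _).trans (rank_mul_le_right _ _)
    _ = min d r := by
        rw [rank_diagonal, Fintype.card_subtype]
        simpa [topInd] using Fin.card_filter_val_lt
    _ ≤ r := min_le_right _ _

theorem opNorm_sub_mul_topProj_le (k : Fin d) : opNorm (A - A * E.topProj k) ≤ √(E.μ k) := by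
  set t := topInd d k
  have hAU : (A - A * E.topProj k) * E.U = A * E.U * diagonal (1 - t) := by
    rw [Matrix.sub_mul, Matrix.mul_assoc A, topProj, Matrix.mul_assoc, Matrix.mul_assoc,
      E.transpose_mul_self, Matrix.mul_one, diagonal_one_sub, Matrix.mul_sub, Matrix.mul_one,
      Matrix.mul_assoc]
  refine opNorm_le_of_dotProduct_mulVec_le (Real.sqrt_nonneg _) fun v => ?_
  obtain ⟨y, rfl⟩ : ∃ y, v = E.U *ᵥ y :=
    ⟨E.Uᵀ *ᵥ v, by rw [mulVec_mulVec, E.mul_transpose_self, one_mulVec]⟩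
  rw [mulVec_mulVec, hAU, ← mulVec_mulVec, ← mulVec_mulVec, E.dotProduct_self_mulVec_U_mulVec,
    E.dotProduct_self_U_mulVec, Real.sq_sqrt (E.nonneg k), dotProduct, Finset.mul_sum]
  refine Finset.sum_le_sum fun j _ => ?_
  rw [mulVec_diagonal, Pi.sub_apply, Pi.one_apply]
  by_cases hj : (j : ℕ) < k
  · simpa [t, topInd, hj] using mul_nonneg (E.nonneg k) (mul_self_nonneg (y j))
  · have hμ : E.μ j ≤ E.μ k := E.antitone (Fin.le_def.mpr (Nat.le_of_not_lt hj))
    simp only [t, topInd, hj, if_false, sub_zero, one_mul]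
    nlinarith [mul_self_nonneg (y j)]

theorem sqrt_le_opNorm_sub (k : Fin d) {B : Matrix (Fin m) (Fin d) ℝ} (hB : B.rank ≤ k) :
    √(E.μ k) ≤ opNorm (A - B) := by
  -- test `A - B` on a nonzero vector in the span of the first `k + 1` columns of `U` killed by `B`
  set c : Fin (k + 1) → Fin d := Fin.castLE k.isLt
  have hc : Function.Injective c := Fin.castLE_injective _
  set J : Matrix (Fin d) (Fin (k + 1)) ℝ := (1 : Matrix (Fin d) (Fin d) ℝ).submatrix id c
  have hrank : (B * E.U * J).rank < Fintype.card (Fin (k + 1)) := by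
    rw [Fintype.card_fin]
    exact Nat.lt_succ_of_le ((rank_mul_le_left _ _).trans ((rank_mul_le_left _ _).trans hB))
  obtain ⟨w, hw0, hBw⟩ := exists_mulVec_eq_zero_of_rank_lt (B * E.U * J) hrank
  set v := E.U *ᵥ (J *ᵥ w)
  have hJJ : Jᵀ * J = 1 := by
    calc Jᵀ * J = Jᵀ * diagonal (fun _ => 1) * J := by rw [diagonal_one, Matrix.mul_one]
      _ = 1 := (transpose_mul_diagonal_mul_submatrix_one hc _).trans diagonal_one
  have hv : v ⬝ᵥ v = w ⬝ᵥ w := by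
    rw [E.dotProduct_self_U_mulVec, mulVec_dotProduct_mulVec, hJJ, one_mulVec]
  have hAv : ((A - B) *ᵥ v) ⬝ᵥ ((A - B) *ᵥ v) = ∑ i, E.μ (c i) * w i ^ 2 := by
    rw [sub_mulVec, show B *ᵥ v = 0 by rw [mulVec_mulVec, mulVec_mulVec, hBw], sub_zero,
      E.dotProduct_self_mulVec_U_mulVec, ← dotProduct_diagonal_mulVec,
      mulVec_mulVec w (diagonal E.μ) J, mulVec_dotProduct_mulVec, ← Matrix.mul_assoc,
      transpose_mul_diagonal_mul_submatrix_one hc, dotProduct_diagonal_mulVec]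
    rfl
  have hlow : E.μ k * (w ⬝ᵥ w) ≤ opNorm (A - B) ^ 2 * (w ⬝ᵥ w) := by
    refine le_trans ?_ (hv ▸ hAv ▸ dotProduct_mulVec_le_opNorm_sq (A - B) v)
    rw [dotProduct, Finset.mul_sum]
    refine Finset.sum_le_sum fun i _ => ?_
    have hμ : E.μ k ≤ E.μ (c i) := E.antitone (Fin.le_def.mpr (Nat.lt_succ_iff.mp i.isLt))
    nlinarith [mul_self_nonneg (w i)]
  have hw : 0 < w ⬝ᵥ w := lt_of_le_of_ne (Finset.sum_nonneg fun i _ => mul_self_nonneg _)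
    (Ne.symm (dotProduct_self_eq_zero.not.mpr hw0))
  exact (Real.sqrt_le_sqrt (le_of_mul_le_mul_right hlow hw)).trans_eq
    (Real.sqrt_sq (norm_nonneg _))

theorem sval_succ (k : Fin d) : sval A (k + 1) = √(E.μ k) := by
  unfold sval
  apply le_antisymm
  · have hmem : A * E.topProj k ∈ {B : Matrix (Fin m) (Fin d) ℝ | B.rank < k + 1} :=
      Nat.lt_succ_of_le ((rank_mul_le_right _ _).trans (E.rank_topProj_le k))
    exact (csInf_le ⟨0, by rintro _ ⟨B, -, rfl⟩; exact norm_nonneg _⟩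
      (Set.mem_image_of_mem _ hmem)).trans (E.opNorm_sub_mul_topProj_le k)
  · exact le_csInf ⟨_, ⟨0, by simp, rfl⟩⟩
      (by rintro _ ⟨B, hB, rfl⟩; exact E.sqrt_le_opNorm_sub k (Nat.lt_succ_iff.mp hB))

theorem μ_lt_of_sval_lt {r : ℕ} (hr : r < d) (hgap : sval A (r + 1) < sval A r) {k : Fin d}
    (hk : (k : ℕ) < r) : E.μ ⟨r, hr⟩ < E.μ k := by
  obtain ⟨r', rfl⟩ : ∃ r', r = r' + 1 := Nat.exists_eq_add_one.mpr (by omega)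
  have h1 := E.sval_succ ⟨r', by omega⟩
  have h2 := E.sval_succ ⟨r' + 1, hr⟩
  simp only at h1 h2
  rw [h1, h2, Real.sqrt_lt_sqrt_iff (E.nonneg _)] at hgap
  exact hgap.trans_le (E.antitone (Fin.le_def.mpr (Nat.lt_succ_iff.mp hk)))

theorem eq_mul_topProj_of_isBestRankApprox {r : ℕ} (hr : r < d)
    (hgap : ∀ k : Fin d, (k : ℕ) < r → E.μ ⟨r, hr⟩ < E.μ k) {B : Matrix (Fin m) (Fin d) ℝ}
    (hB : IsBestRankApprox r A B) : B = A * E.topProj r := by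
  obtain ⟨Q, hQ, hBQ, htrQ⟩ := exists_isStarProjection_mul_eq_self_trace_eq_rank B
  have hR := E.isStarProjection_topProj r
  have hUQU := hQ.transpose_mul_mul E.mul_transpose_self
  set t : Fin d → ℝ := fun k => (E.Uᵀ * Q * E.U) k k
  have htrR : trace (E.topProj r) = r := by rw [E.trace_topProj, min_eq_right hr.le]
  have htrQ_le : trace Q ≤ r := htrQ ▸ Nat.cast_le.mpr hB.1
  have hsum : ∑ k, t k ≤ r := by
    calc ∑ k, t k = trace (E.Uᵀ * Q * E.U) := rfl
      _ = trace Q := by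
        rw [trace_mul_comm, ← Matrix.mul_assoc, E.mul_transpose_self, Matrix.one_mul]
      _ ≤ r := htrQ_le
  have hAR : frobNorm (A * E.topProj r) ^ 2 = ∑ k, E.μ k * topInd d r k := by
    rw [E.frobNorm_sq_mul_isStarProjection_eq_sum hR, E.transpose_mul_topProj_mul]
    simp
  have hAQ := E.frobNorm_sq_mul_isStarProjection_eq_sum hQ
  obtain ⟨hBAQ, hnorm⟩ := hB.eq_mul_of_mul_eq hQ hBQ hR
    ((rank_mul_le_right _ _).trans (E.rank_topProj_le r))
    (frobNorm_le_frobNorm_iff.mpr (hAQ ▸ hAR ▸ sum_mul_le_sum_mul_topInd hr E.antitone E.nonneg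
      hUQU.diag_nonneg hUQU.diag_le_one hsum))
  have heq : ∑ k, E.μ k * t k = ∑ k, E.μ k * topInd d r k := by rw [← hAQ, ← hAR, hnorm]
  have hQR : trace (Q * E.topProj r) = trace (E.topProj r) := by
    rw [show trace (Q * E.topProj r) = ∑ k, topInd d r k * t k from
      trace_mul_conj_diagonal _ _ _, E.trace_topProj, ← sum_topInd]
    refine Finset.sum_congr rfl fun k _ => ?_
    by_cases hk : (k : ℕ) < r
    · simp only [topInd, hk, if_true, one_mul]
      exact eq_one_of_sum_mul_eq_sum_mul_topInd hr E.antitone hgap E.nonneg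
        hUQU.diag_nonneg hUQU.diag_le_one hsum heq hk
    · simp [topInd, hk]
  rw [hBAQ, hQ.eq_of_trace_mul_eq hR hQR (htrR ▸ htrQ_le)]

end SortedGramEigen

theorem IsBestRankApprox.unique {m n r : ℕ} {A B C : Matrix (Fin m) (Fin n) ℝ}
    (hgap : sval A (r + 1) < sval A r) (hB : IsBestRankApprox r A B)
    (hC : IsBestRankApprox r A C) : B = C := by
  obtain ⟨E⟩ := SortedGramEigen.nonempty A
  rcases lt_or_ge r n with hr | hr
  · have hμ := fun (k : Fin n) (hk : (k : ℕ) < r) => E.μ_lt_of_sval_lt hr hgap hk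
    rw [E.eq_mul_topProj_of_isBestRankApprox hr hμ hB,
      E.eq_mul_topProj_of_isBestRankApprox hr hμ hC]
  · rw [hB.eq_self_of_width_le hr, hC.eq_self_of_width_le hr]

/-- Encoding: `S` is the PSD square root of `Σ̂ = (1/n) X Xᵀ`, `P` its Moore–Penrose pseudoinverse
(given by the Penrose equations), and `T = [W S]_r` is characterized as a best rank-`r` Frobenius
approximation of `W S`. -/
theorem lora_solution_general {dy dx n : ℕ} (r : ℕ) (hn : 0 < n)
    (X : Matrix (Fin dx) (Fin n) ℝ)
    (W : Matrix (Fin dy) (Fin dx) ℝ)  -- `W = Δ̂_FFT`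
    (S : Matrix (Fin dx) (Fin dx) ℝ)
    (hS : S.PosSemidef) (hSS : S * S = (n : ℝ)⁻¹ • (X * Xᵀ))
    (P : Matrix (Fin dx) (Fin dx) ℝ)
    (hP1 : S * P * S = S)
    (hP3 : (S * P)ᵀ = S * P) (hP4 : (P * S)ᵀ = P * S)
    (hgap : sval (W * S) (r + 1) < sval (W * S) r)
    (T : Matrix (Fin dy) (Fin dx) ℝ)
    (hT_rank : T.rank ≤ r)
    (hT_best : ∀ C : Matrix (Fin dy) (Fin dx) ℝ, C.rank ≤ r →
      frobNorm (W * S - T) ≤ frobNorm (W * S - C)) :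
    (T * P).rank ≤ r
      ∧ (∀ Δ : Matrix (Fin dy) (Fin dx) ℝ, Δ.rank ≤ r →
          frobNorm (T * P * X - W * X) ≤ frobNorm (Δ * X - W * X))
      ∧ (∀ Δ : Matrix (Fin dy) (Fin dx) ℝ, Δ.rank ≤ r →
          frobNorm (Δ * X - W * X) = frobNorm (T * P * X - W * X) →
          frobNorm (T * P) ≤ frobNorm Δ) := by
  have hXS : X * Xᵀ = (n : ℝ) • (S * Sᵀ) := by
    rw [(by simpa using hS.1 : S.IsSymm).eq, hSS, smul_smul, mul_inv_cancel₀ (by positivity),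
      one_smul]
  have hscale : ∀ Δ Δ' : Matrix (Fin dy) (Fin dx) ℝ,
      frobNorm (Δ * X - W * X) ≤ frobNorm (Δ' * X - W * X) ↔
        frobNorm (Δ * S - W * S) ≤ frobNorm (Δ' * S - W * S) := fun Δ Δ' => by
    simpa only [Matrix.sub_mul] using
      frobNorm_mul_le_frobNorm_mul_iff hXS (by positivity) (Δ - W) (Δ' - W)
  have hTPS : frobNorm (T * P * S - W * S) ≤ frobNorm (W * S - T) := by
    rw [show T * P * S - W * S = (T - W * S) * (P * S) by
      rw [Matrix.sub_mul, Matrix.mul_assoc, Matrix.mul_assoc W, ← Matrix.mul_assoc S P S, hP1],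
      frobNorm_sub_comm (W * S)]
    exact frobNorm_mul_isStarProjection_le _ (isStarProjection_mul_of_mul_mul_eq_right hP1 hP4)
  have hΔS : ∀ Δ : Matrix (Fin dy) (Fin dx) ℝ, Δ.rank ≤ r →
      frobNorm (T * P * S - W * S) ≤ frobNorm (Δ * S - W * S) := fun Δ hΔ =>
    hTPS.trans ((hT_best _ ((rank_mul_le_left _ _).trans hΔ)).trans_eq (frobNorm_sub_comm _ _))
  refine ⟨(rank_mul_le_left _ _).trans hT_rank, fun Δ hΔ => (hscale _ _).mpr (hΔS Δ hΔ),
    fun Δ hΔ heq => ?_⟩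
  have hbest : IsBestRankApprox r (W * S) (Δ * S) :=
    ⟨(rank_mul_le_left _ _).trans hΔ, fun C hC => (frobNorm_sub_comm _ _).trans_le
      ((((hscale _ _).mp heq.le).trans hTPS).trans (hT_best C hC))⟩
  calc frobNorm (T * P) = frobNorm (Δ * (S * P)) := by
        rw [IsBestRankApprox.unique hgap ⟨hT_rank, hT_best⟩ hbest, Matrix.mul_assoc]
    _ ≤ frobNorm Δ :=
        frobNorm_mul_isStarProjection_le Δ (isStarProjection_mul_of_mul_mul_eq_left hP1 hP3)

/-- The LoRA solution: `Δ̂_LoRA = [Δ̂_FFT Σ̂^{1/2}]_r (Σ̂^{1/2})⁺` minimizes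
`‖ΔX − Δ̂_FFT X‖_F²` over rank-`≤ r` matrices and has minimal Frobenius norm among
all minimizers.  Here `S` is the PSD square root of `Σ̂ = (1/n)XXᵀ`, `P` its
Moore–Penrose pseudoinverse (characterized by the Penrose equations), and `T` the
rank-`r` SVD truncation of `Δ̂_FFT S` (characterized as its best rank-`r`
approximation in Frobenius norm, unique thanks to the singular-value gap). -/
theorem lora_solution {dy dx n : ℕ} (r : ℕ) (hn : 0 < n)
    (X : Matrix (Fin dx) (Fin n) ℝ) (hX : X.rank = min n dx)
    (W : Matrix (Fin dy) (Fin dx) ℝ)  -- `W = Δ̂_FFT`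
    (S : Matrix (Fin dx) (Fin dx) ℝ)
    (hS : S.PosSemidef) (hSS : S * S = (n : ℝ)⁻¹ • (X * Xᵀ))
    (P : Matrix (Fin dx) (Fin dx) ℝ)
    (hP1 : S * P * S = S) (hP2 : P * S * P = P)
    (hP3 : (S * P)ᵀ = S * P) (hP4 : (P * S)ᵀ = P * S)
    (hrank : r ≤ (W * S).rank)
    (hgap : sval (W * S) (r + 1) < sval (W * S) r)
    (T : Matrix (Fin dy) (Fin dx) ℝ)
    (hT_rank : T.rank ≤ r)
    (hT_best : ∀ C : Matrix (Fin dy) (Fin dx) ℝ, C.rank ≤ r →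
      frobNorm (W * S - T) ≤ frobNorm (W * S - C)) :
    (T * P).rank ≤ r
      ∧ (∀ Δ : Matrix (Fin dy) (Fin dx) ℝ, Δ.rank ≤ r →
          frobNorm (T * P * X - W * X) ≤ frobNorm (Δ * X - W * X))
      ∧ (∀ Δ : Matrix (Fin dy) (Fin dx) ℝ, Δ.rank ≤ r →
          frobNorm (Δ * X - W * X) = frobNorm (T * P * X - W * X) →
          frobNorm (T * P) ≤ frobNorm Δ) :=
  lora_solution_general r hn X W S hS hSS P hP1 hP3 hP4 hgap T hT_rank hT_best
end
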